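/- arXiv:1608.03413 — 3 statements merged into one kernel-verified Lean document; each statement's English description precedes it below -/
import Mathlib

section
/- For any two sets L, R of surreal numbers such that every element of L is less than every element of R, there exists a surreal number a with L < a < R (i.e., every element of L is less than a and a is less than every element of R). -/
universe u

namespace SetTheory

/-- Pre-games, as in Mathlib's former `SetTheory.PGame` (removed from Mathlib). -/
inductive PGame : Type (u + 1)
  | mk : ∀ α β : Type u, (α → PGame) → (β → PGame) → PGame

namespace PGame

/-- The left options of a pre-game. -/
def LeftMoves : PGame.{u} → Type u
  | mk l _ _ _ => l

/-- The right options of a pre-game. -/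
def RightMoves : PGame.{u} → Type u
  | mk _ r _ _ => r

/-- A left move. -/
def moveLeft : ∀ g : PGame.{u}, LeftMoves g → PGame.{u}
  | mk _ _ L _ => L

/-- A right move. -/
def moveRight : ∀ g : PGame.{u}, RightMoves g → PGame.{u}
  | mk _ _ _ R => R

/-- Auxiliary: for fixed `x` (given through `FL i y := y ≤ xL i` and `GR j y := xR j ≤ y`),
computes the pair `(x ≤ y, y ≤ x)` by recursion on `y`. -/
def leAux {xl xr : Type u} (FL : xl → PGame.{u} → Prop) (GR : xr → PGame.{u} → Prop) :
    PGame.{u} → Prop × Prop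
  | mk _ _ yL yR =>
    ((∀ i, ¬ FL i (mk _ _ yL yR)) ∧ ∀ j, ¬ (leAux FL GR (yR j)).2,
     (∀ i, ¬ (leAux FL GR (yL i)).1) ∧ ∀ j, ¬ GR j (mk _ _ yL yR))

/-- Auxiliary: the pair of predicates `(x ≤ ·, · ≤ x)`. -/
def leLe : PGame.{u} → (PGame.{u} → Prop) × (PGame.{u} → Prop)
  | mk _ _ xL xR =>
    (fun y => (leAux (fun i => (leLe (xL i)).2) (fun j => (leLe (xR j)).1) y).1,
     fun y => (leAux (fun i => (leLe (xL i)).2) (fun j => (leLe (xR j)).1) y).2)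

/-- The order on pre-games: `x ≤ y` iff no left option of `x` is `≥ y` and no right option of
`y` is `≤ x`. -/
instance : LE PGame.{u} :=
  ⟨fun x y => (leLe x).1 y⟩

theorem leLe_symm (a b : PGame.{u}) :
    ((leLe a).2 b ↔ (leLe b).1 a) ∧ ((leLe a).1 b ↔ (leLe b).2 a) := by
  induction a generalizing b with
  | mk al ar aL aR ihL ihR =>
    induction b with
    | mk bl br bL bR jhL jhR =>
      constructor
      · show ((∀ i, ¬ (leLe (mk al ar aL aR)).1 (bL i)) ∧
            ∀ j, ¬ (leLe (aR j)).1 (mk bl br bL bR)) ↔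
          ((∀ i, ¬ (leLe (bL i)).2 (mk al ar aL aR)) ∧
            ∀ j, ¬ (leLe (mk bl br bL bR)).2 (aR j))
        exact and_congr (forall_congr' fun i => not_congr (jhL i).2)
          (forall_congr' fun j => not_congr (ihR j (mk bl br bL bR)).2)
      · show ((∀ i, ¬ (leLe (aL i)).2 (mk bl br bL bR)) ∧
            ∀ j, ¬ (leLe (mk al ar aL aR)).2 (bR j)) ↔
          ((∀ i, ¬ (leLe (mk bl br bL bR)).1 (aL i)) ∧
            ∀ j, ¬ (leLe (bR j)).1 (mk al ar aL aR))
        exact and_congr (forall_congr' fun i => not_congr (ihL i (mk bl br bL bR)).1)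
          (forall_congr' fun j => not_congr (jhR j).1)

theorem mk_le_mk {xl xr yl yr : Type u} {xL : xl → PGame.{u}} {xR : xr → PGame.{u}}
    {yL : yl → PGame.{u}} {yR : yr → PGame.{u}} :
    mk xl xr xL xR ≤ mk yl yr yL yR ↔
      (∀ i, ¬ mk yl yr yL yR ≤ xL i) ∧ ∀ j, ¬ yR j ≤ mk xl xr xL xR := by
  show ((∀ i, ¬ (leLe (xL i)).2 (mk yl yr yL yR)) ∧
      ∀ j, ¬ (leLe (mk xl xr xL xR)).2 (yR j)) ↔ _
  exact and_congr (forall_congr' fun i => not_congr (leLe_symm (xL i) (mk yl yr yL yR)).1)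
    (forall_congr' fun j => not_congr (leLe_symm (mk xl xr xL xR) (yR j)).1)

theorem le_def {x y : PGame.{u}} :
    x ≤ y ↔ (∀ i, ¬ y ≤ x.moveLeft i) ∧ ∀ j, ¬ y.moveRight j ≤ x := by
  cases x
  cases y
  exact mk_le_mk

theorem le_refl_aux (x : PGame.{u}) : x ≤ x := by
  induction x with
  | mk xl xr xL xR ihL ihR =>
    exact mk_le_mk.2 ⟨fun i h => (le_def.1 h).1 i (ihL i), fun j h => (le_def.1 h).2 j (ihR j)⟩

theorem le_trans_aux (x y z : PGame.{u}) :
    (x ≤ y → y ≤ z → x ≤ z) ∧ (y ≤ z → z ≤ x → y ≤ x) ∧ (z ≤ x → x ≤ y → z ≤ y) := by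
  induction x generalizing y z with
  | mk xl xr xL xR ihxL ihxR =>
  induction y generalizing z with
  | mk yl yr yL yR ihyL ihyR =>
  induction z with
  | mk zl zr zL zR ihzL ihzR =>
    refine ⟨fun hxy hyz => ?_, fun hyz hzx => ?_, fun hzx hxy => ?_⟩
    · refine mk_le_mk.2 ⟨fun i h => ?_, fun k h => ?_⟩
      · exact (mk_le_mk.1 hxy).1 i ((ihxL i _ _).2.1 hyz h)
      · exact (mk_le_mk.1 hyz).2 k ((ihzR k).2.2 h hxy)
    · refine mk_le_mk.2 ⟨fun j h => ?_, fun i h => ?_⟩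
      · exact (mk_le_mk.1 hyz).1 j ((ihyL j _).2.2 hzx h)
      · exact (mk_le_mk.1 hzx).2 i ((ihxR i _ _).1 h hyz)
    · refine mk_le_mk.2 ⟨fun k h => ?_, fun j h => ?_⟩
      · exact (mk_le_mk.1 hzx).1 k ((ihzL k).1 hxy h)
      · exact (mk_le_mk.1 hxy).2 j ((ihyR j _).2.1 h hzx)

/-- Pre-games form a preorder; `x < y ↔ x ≤ y ∧ ¬ y ≤ x`, as in Mathlib's former instance. -/
instance : Preorder PGame.{u} where
  le_refl x := le_refl_aux x
  le_trans x y z := (le_trans_aux x y z).1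

/-- A pre-game is numeric if all its left options are less than all its right options,
and all options are numeric. -/
def Numeric : PGame.{u} → Prop
  | ⟨_, _, L, R⟩ => (∀ i j, L i < R j) ∧ (∀ i, Numeric (L i)) ∧ ∀ j, Numeric (R j)

/-- Equivalence of pre-games: `x ≤ y ∧ y ≤ x`. -/
def Equiv (x y : PGame.{u}) : Prop :=
  x ≤ y ∧ y ≤ x

/-- The setoid of equivalence on numeric pre-games. -/
instance numericSetoid : Setoid (Subtype Numeric.{u}) where
  r x y := Equiv x.1 y.1
  iseqv := ⟨fun _ => ⟨le_refl _, le_refl _⟩, fun h => ⟨h.2, h.1⟩,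
    fun h₁ h₂ => ⟨le_trans h₁.1 h₂.1, le_trans h₂.2 h₁.2⟩⟩

end PGame

end SetTheory

open SetTheory

/-- The type of surreal numbers: numeric pre-games modulo equivalence
(Mathlib's former `Surreal`). -/
def Surreal : Type (u + 1) :=
  Quotient PGame.numericSetoid.{u}

namespace Surreal

/-- The order `<` on surreal numbers, lifted from pre-games. -/
instance : LT Surreal.{u} :=
  ⟨Quotient.lift₂ (fun x y : Subtype PGame.Numeric.{u} => x.1 < y.1) (fun _ _ _ _ hx hy =>
    propext ⟨fun h => lt_of_le_of_lt hx.2 (lt_of_lt_of_le h hy.1),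
      fun h => lt_of_le_of_lt hx.1 (lt_of_lt_of_le h hy.2)⟩)⟩

end Surreal

/-! The game `{L | R}` whose options are representatives of the members of `L` and `R` is
numeric because `L < R`, and every numeric game lies strictly between its left and its right
options. -/

namespace SetTheory.PGame

theorem not_le_moveLeft (x : PGame.{u}) (i : x.LeftMoves) : ¬ x ≤ x.moveLeft i :=
  fun h => (le_def.1 h).1 i le_rfl

theorem not_moveRight_le (x : PGame.{u}) (j : x.RightMoves) : ¬ x.moveRight j ≤ x :=
  fun h => (le_def.1 h).2 j le_rfl

theorem Numeric.moveLeft_le {x : PGame.{u}} (o : x.Numeric) (i : x.LeftMoves) :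
    x.moveLeft i ≤ x := by
  induction x with
  | mk xl xr xL xR ih =>
    obtain ⟨hLR, hL, -⟩ := o
    refine le_def.2 ⟨fun k hk => ?_, fun j hj => ?_⟩
    · exact not_le_moveLeft (mk xl xr xL xR) i (le_trans hk (ih i (hL i) k))
    · exact lt_irrefl _ (lt_of_lt_of_le (hLR i j) hj)

theorem Numeric.le_moveRight {x : PGame.{u}} (o : x.Numeric) (j : x.RightMoves) :
    x ≤ x.moveRight j := by
  induction x with
  | mk xl xr xL xR _ ih =>
    obtain ⟨hLR, -, hR⟩ := o
    refine le_def.2 ⟨fun i hi => ?_, fun k hk => ?_⟩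
    · exact lt_irrefl _ (lt_of_lt_of_le (hLR i j) hi)
    · exact not_moveRight_le (mk xl xr xL xR) j (le_trans (ih j (hR j) k) hk)

theorem Numeric.moveLeft_lt {x : PGame.{u}} (o : x.Numeric) (i : x.LeftMoves) :
    x.moveLeft i < x :=
  lt_iff_le_not_ge.2 ⟨o.moveLeft_le i, not_le_moveLeft x i⟩

theorem Numeric.lt_moveRight {x : PGame.{u}} (o : x.Numeric) (j : x.RightMoves) :
    x < x.moveRight j :=
  lt_iff_le_not_ge.2 ⟨o.le_moveRight j, not_moveRight_le x j⟩

end SetTheory.PGame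

namespace Surreal

open SetTheory

def mk (x : PGame.{u}) (h : x.Numeric) : Surreal.{u} :=
  Quotient.mk _ ⟨x, h⟩

theorem mk_out (a : Surreal.{u}) : mk a.out.1 a.out.2 = a :=
  Quotient.out_eq a

theorem exists_between_families {ι κ : Type u} (l : ι → Surreal.{u}) (r : κ → Surreal.{u})
    (h : ∀ i j, l i < r j) : ∃ a : Surreal.{u}, (∀ i, l i < a) ∧ ∀ j, a < r j := by
  let x : PGame.{u} := ⟨ι, κ, fun i => (l i).out.1, fun j => (r j).out.1⟩
  have hx : x.Numeric := by
    refine ⟨fun i j => ?_, fun i => (l i).out.2, fun j => (r j).out.2⟩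
    have hlr := h i j
    rwa [← mk_out (l i), ← mk_out (r j)] at hlr
  refine ⟨mk x hx, fun i => ?_, fun j => ?_⟩
  · rw [← mk_out (l i)]
    exact hx.moveLeft_lt i
  · rw [← mk_out (r j)]
    exact hx.lt_moveRight j

end Surreal

/-- **(S1)** For any two (small) sets `L`, `R` of surreal numbers such that every member of `L`
is less than every member of `R`, there is a surreal number lying strictly between them. -/
theorem stmt0 (L R : Set Surreal.{u}) [Small.{u} L] [Small.{u} R]
    (h : ∀ l ∈ L, ∀ r ∈ R, l < r) :
    ∃ a : Surreal.{u}, (∀ l ∈ L, l < a) ∧ ∀ r ∈ R, a < r := by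
  obtain ⟨a, hLa, haR⟩ := Surreal.exists_between_families
    (fun i => ((equivShrink L).symm i : Surreal)) (fun j => ((equivShrink R).symm j : Surreal))
    (fun i j => h _ ((equivShrink L).symm i).2 _ ((equivShrink R).symm j).2)
  refine ⟨a, fun l hl => ?_, fun r hr => ?_⟩
  · simpa using hLa (equivShrink L ⟨l, hl⟩)
  · simpa using haR (equivShrink R ⟨r, hr⟩)
end

section
/- In a field of Hahn series R((G)) over an ordered abelian group G with real coefficients, the formal exponential of an infinitesimal series ε (defined as the sum Σ_{k≥0} ε^k / k!) is well-defined (the family (ε^k/k!) is summable) and satisfies exp(ε + δ) = exp(ε)·exp(δ) for infinitesimal ε, δ. -/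
/-!
Neumann's lemma (`HahnSeries.SummableFamily.powers`) makes `(ε ^ k)_k` summable when
`0 < ε.orderTop`, hence also `(ε ^ k / k!)_k`. For the functional equation, the product family
`(ε ^ i / i! * δ ^ j / j!)_(i, j)` is summable with sum `exp ε * exp δ`. Its fibres under
`(i, j) ↦ i + j` are finite, so grouping them does not change the sum, and by the binomial
theorem the `n`-th group is `(ε + δ) ^ n / n!`.
-/

open Finset

theorem Finset.HasAntidiagonal.finite_preimage_add_singleton {A : Type*} [AddMonoid A]
    [HasAntidiagonal A] (n : A) : ((fun p : A × A => p.1 + p.2) ⁻¹' {n}).Finite :=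
  (antidiagonal n).finite_toSet.subset fun _ hp => mem_antidiagonal.2 hp

namespace HahnSeries

theorem zero_lt_orderTop_of_forall_mem_support {Γ R : Type*} [LinearOrder Γ] [Zero Γ] [Zero R]
    {x : R⟦Γ⟧} (h : ∀ g ∈ x.support, 0 < g) : 0 < x.orderTop := by
  obtain rfl | hx := eq_or_ne x 0
  · simp
  · exact zero_lt_orderTop_of_order (h _ (mt coeff_order_eq_zero.1 hx))

namespace SummableFamily

variable {Γ R α β : Type*} [PartialOrder Γ] [AddCommMonoid R]

@[simps]
noncomputable def sumFibers (s : SummableFamily Γ R α) (f : α → β)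
    (hf : ∀ b, (f ⁻¹' {b}).Finite) : SummableFamily Γ R β where
  toFun b := ∑ a ∈ (hf b).toFinset, s a
  isPWO_iUnion_support' := s.isPWO_iUnion_support.mono <| Set.iUnion_subset fun b g hg => by
    rw [mem_support, coeff_sum] at hg
    obtain ⟨a, -, ha⟩ := exists_ne_zero_of_sum_ne_zero hg
    exact Set.mem_iUnion.2 ⟨a, ha⟩
  finite_co_support' g := ((s.finite_co_support g).image f).subset fun b hb => by
    rw [Set.mem_ofPred_eq, coeff_sum] at hb
    obtain ⟨a, ha, hga⟩ := exists_ne_zero_of_sum_ne_zero hb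
    exact ⟨a, hga, by simpa using ha⟩

theorem hsum_sumFibers (s : SummableFamily Γ R α) (f : α → β)
    (hf : ∀ b, (f ⁻¹' {b}).Finite) : (s.sumFibers f hf).hsum = s.hsum := by
  classical
  ext g
  obtain ⟨t, ht⟩ : ∃ t : Finset α, ∀ a, a ∈ t ↔ (s a).coeff g ≠ 0 :=
    ⟨_, fun a => (s.finite_co_support g).mem_toFinset⟩
  have hst : {a | (s a).coeff g ≠ 0} ⊆ t := fun a ha => (ht a).2 ha
  have hft : {b | (s.sumFibers f hf b).coeff g ≠ 0} ⊆ t.image f := fun b hb => by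
    rw [Set.mem_ofPred_eq, sumFibers_toFun, coeff_sum] at hb
    obtain ⟨a, ha, hga⟩ := exists_ne_zero_of_sum_ne_zero hb
    exact mem_image.2 ⟨a, (ht a).2 hga, by simpa using ha⟩
  rw [coeff_hsum_eq_sum_of_subset hft, coeff_hsum_eq_sum_of_subset hst,
    ← sum_fiberwise_of_maps_to fun a ha => mem_image_of_mem f ha]
  refine sum_congr rfl fun b _ => ?_
  rw [sumFibers_toFun, coeff_sum]
  refine (sum_subset (fun a ha => by simpa using (mem_filter.1 ha).2) fun a ha hat => ?_).symm
  exact not_not.1 fun hga => hat (mem_filter.2 ⟨(ht a).2 hga, by simpa using ha⟩)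

section Exp

open Nat

variable {Γ K : Type*} [AddCommMonoid Γ] [LinearOrder Γ] [IsOrderedCancelAddMonoid Γ]
  [Field K]

noncomputable def expFamily (x : K⟦Γ⟧) : SummableFamily Γ K ℕ :=
  smulFamily (fun n => (n ! : K)⁻¹) (powers x)

theorem expFamily_of_orderTop_pos {x : K⟦Γ⟧} (hx : 0 < x.orderTop) (n : ℕ) :
    expFamily x n = (n ! : K)⁻¹ • x ^ n := by
  simp [expFamily, hx]

theorem expFamily_add [CharZero K] {x y : K⟦Γ⟧} (hx : 0 < x.orderTop) (hy : 0 < y.orderTop) :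
    expFamily (x + y) = (mul (expFamily x) (expFamily y)).sumFibers _
      HasAntidiagonal.finite_preimage_add_singleton := by
  have hxy : 0 < (x + y).orderTop := (lt_min hx hy).trans_le min_orderTop_le_orderTop_add
  ext1 n
  have hfib : (HasAntidiagonal.finite_preimage_add_singleton n).toFinset = antidiagonal n := by
    ext p; simp
  rw [sumFibers_toFun, hfib, expFamily_of_orderTop_pos hxy, (Commute.all x y).add_pow', smul_sum]
  refine sum_congr rfl fun ⟨i, j⟩ hij => ?_
  simp only [HasAntidiagonal.mem_antidiagonal] at hij
  subst hij
  rw [mul_toFun, expFamily_of_orderTop_pos hx, expFamily_of_orderTop_pos hy, smul_mul_smul_comm,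
    ← Nat.cast_smul_eq_nsmul K, smul_smul, Nat.cast_add_choose]
  congr 1
  have : ((i + j)! : K) ≠ 0 := Nat.cast_ne_zero.2 (factorial_ne_zero _)
  field_simp

theorem hsum_expFamily_add [CharZero K] {x y : K⟦Γ⟧} (hx : 0 < x.orderTop)
    (hy : 0 < y.orderTop) :
    (expFamily (x + y)).hsum = (expFamily x).hsum * (expFamily y).hsum := by
  rw [expFamily_add hx hy, hsum_sumFibers, hsum_mul]

end Exp

end SummableFamily

end HahnSeries

/-- In a field of Hahn series `ℝ((G))` over an ordered abelian group `G`, the formal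
exponential `exp ε = Σ_{k≥0} ε^k / k!` of an infinitesimal series `ε` (one whose support
consists only of strictly positive elements of `G`) is well defined — the family
`(ε^k / k!)_k` is summable — and satisfies `exp (ε + δ) = exp ε * exp δ` for
infinitesimal `ε`, `δ`. -/
theorem stmt13 {Γ : Type*} [AddCommGroup Γ] [LinearOrder Γ] [IsOrderedAddMonoid Γ] :
    ∃ exp : HahnSeries Γ ℝ → HahnSeries Γ ℝ,
      ∀ ε : HahnSeries Γ ℝ, (∀ g ∈ ε.support, 0 < g) →
        (∃ S : HahnSeries.SummableFamily Γ ℝ ℕ,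
            (∀ k : ℕ, S k = (k.factorial : ℝ)⁻¹ • ε ^ k) ∧ exp ε = S.hsum) ∧
        ∀ δ : HahnSeries Γ ℝ, (∀ g ∈ δ.support, 0 < g) →
          exp (ε + δ) = exp ε * exp δ := by
  open HahnSeries SummableFamily in
  refine ⟨fun x => (expFamily x).hsum, fun ε hε => ?_⟩
  have hε' := zero_lt_orderTop_of_forall_mem_support hε
  exact ⟨⟨expFamily ε, expFamily_of_orderTop_pos hε', rfl⟩, fun δ hδ =>
    hsum_expFamily_add hε' (zero_lt_orderTop_of_forall_mem_support hδ)⟩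
end

section
/- In an H-field, if x and y are elements with x ≻ 1 and y ≻ 1 (both infinitely large relative to the constant field) and x ≺ y, then D(x) ≺ D(y) (strong L'Hospital rule). -/
/-- An H-field: an ordered field `K` with a derivation `D` such that any element greater
than all constants has positive derivative (H1), and any element bounded by a constant is
within every positive constant of some constant (H2). The constants are `ker D`. -/
structure HField (K : Type*) [Field K] [LinearOrder K] [IsStrictOrderedRing K] where
  D : K → K
  map_add : ∀ x y, D (x + y) = D x + D y
  leibniz : ∀ x y, D (x * y) = x * D y + y * D x
  h1 : ∀ x : K, (∀ c, D c = 0 → c < x) → 0 < D x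
  h2 : ∀ x : K, (∃ c, D c = 0 ∧ |x| < c) →
    ∃ d, D d = 0 ∧ ∀ c, D c = 0 → 0 < c → |x - d| < c

/-- The dominance relation `x ≺ y` induced by the valuation whose valuation ring is the
convex hull of the constants: `c·x` is smaller than `y` in absolute value for every
constant `c`. -/
def HField.Smallo {K : Type*} [Field K] [LinearOrder K] [IsStrictOrderedRing K] (F : HField K) (x y : K) : Prop :=
  ∀ c : K, F.D c = 0 → |c| * |x| < |y|

/-!
If `x` exceeds every constant, `0 ≤ y` and `x ≺ y`, then for each constant `c ≥ 0` the element
`y - c·x` exceeds every constant `d`, since `c·x + d ≤ (c + |d|)·x < y`; so (H1) gives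
`D y - c·D x > 0`. As `D |x| = ±D x` and `≺` only sees absolute values, the theorem follows by
applying this to `|x|` and `|y|`.
-/

namespace HField

variable {K : Type*} [Field K] [LinearOrder K] [IsStrictOrderedRing K] (F : HField K)

lemma D_zero : F.D 0 = 0 := by
  have h := F.map_add 0 0
  rw [add_zero] at h
  linarith

lemma D_one : F.D 1 = 0 := by
  have h := F.leibniz 1 1
  rw [mul_one, one_mul] at h
  linarith

lemma D_neg (a : K) : F.D (-a) = -F.D a := by
  have h := F.map_add a (-a)
  rw [add_neg_cancel, F.D_zero] at h
  linarith

lemma D_sub (a b : K) : F.D (a - b) = F.D a - F.D b := by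
  rw [sub_eq_add_neg, F.map_add, F.D_neg, ← sub_eq_add_neg]

lemma D_const_mul {c : K} (hc : F.D c = 0) (a : K) : F.D (c * a) = c * F.D a := by
  rw [F.leibniz, hc, mul_zero, add_zero]

lemma abs_D_abs (a : K) : |F.D (|a|)| = |F.D a| := by
  rcases abs_choice a with h | h <;> simp only [h, F.D_neg, abs_neg]

lemma D_abs_of_D_eq_zero {c : K} (hc : F.D c = 0) : F.D |c| = 0 := by
  rw [← abs_eq_zero, F.abs_D_abs, hc, abs_zero]

lemma smallo_abs_abs {a b : K} : F.Smallo |a| |b| ↔ F.Smallo a b := by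
  simp only [Smallo, abs_abs]

lemma const_lt_abs_of_one_smallo {x : K} (hx : F.Smallo 1 x) {c : K} (hc : F.D c = 0) :
    c < |x| := by
  have h := hx c hc
  rw [abs_one, mul_one] at h
  exact (le_abs_self c).trans_lt h

lemma const_mul_D_lt_D {x y : K} (hx : ∀ d, F.D d = 0 → d < x) (hy : 0 ≤ y)
    (hxy : F.Smallo x y) {c : K} (hc : F.D c = 0) (hc0 : 0 ≤ c) :
    c * F.D x < F.D y := by
  have hx1 : 1 < x := hx 1 F.D_one
  have hgt : ∀ d, F.D d = 0 → d < y - c * x := by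
    intro d hd
    have hcd : F.D (c + |d|) = 0 := by rw [F.map_add, hc, F.D_abs_of_D_eq_zero hd, add_zero]
    have hlt := hxy (c + |d|) hcd
    rw [abs_of_nonneg (add_nonneg hc0 (abs_nonneg d)), abs_of_pos (one_pos.trans hx1),
      abs_of_nonneg hy] at hlt
    have hdx : d ≤ |d| * x := (le_abs_self d).trans (le_mul_of_one_le_right (abs_nonneg d) hx1.le)
    linarith
  have hpos := F.h1 _ hgt
  rw [F.D_sub, F.D_const_mul hc] at hpos
  linarith

lemma smallo_D_of_gt_const {x y : K} (hx : ∀ d, F.D d = 0 → d < x) (hy : 0 ≤ y)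
    (hxy : F.Smallo x y) : F.Smallo (F.D x) (F.D y) := by
  intro c hc
  rw [abs_of_pos (F.h1 x hx)]
  exact (F.const_mul_D_lt_D hx hy hxy (F.D_abs_of_D_eq_zero hc) (abs_nonneg c)).trans_le
    (le_abs_self _)

end HField

theorem stmt14_general {K : Type*} [Field K] [LinearOrder K] [IsStrictOrderedRing K] (F : HField K) (x y : K)
    (hx : F.Smallo 1 x) (hxy : F.Smallo x y) :
    F.Smallo (F.D x) (F.D y) := by
  have h := F.smallo_D_of_gt_const (fun _ hc => F.const_lt_abs_of_one_smallo hx hc)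
    (abs_nonneg y) (F.smallo_abs_abs.2 hxy)
  intro c hc
  simpa only [F.abs_D_abs] using h c hc

/-- **Strong L'Hospital rule**: in an H-field, if `x ≻ 1`, `y ≻ 1` and `x ≺ y`,
then `D x ≺ D y`. -/
theorem stmt14 {K : Type*} [Field K] [LinearOrder K] [IsStrictOrderedRing K] (F : HField K) (x y : K)
    (hx : F.Smallo 1 x) (hy : F.Smallo 1 y) (hxy : F.Smallo x y) :
    F.Smallo (F.D x) (F.D y) :=
  stmt14_general F x y hx hxy
end
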